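/- Let n ≥ 1 and let ξ_1,…,ξ_5 be independent random vectors, each uniformly distributed on the unit sphere of ℂ^n, and let Ξ = [ξ_1 … ξ_5]. Then for every constant c > 0: E[det(I_5 + c·Ξ†Ξ)] = (1+c)⁵ − 10c²(1+c)³/n + 20c³(1+c)²/n² − c⁴(1+c)·(30/n³ − 15/n²) + c⁵·(24/n⁴ − 20/n³). -/

import Mathlib

/-!
Expand `det (1 + c G)` over permutations. Almost surely the diagonal of the Gram matrix `G` is
`1`, so the term of `σ` is `sign σ (1 + c)^(fixed points) c^(moved points) ∏ᵢ G (σ i) i`.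
Invariance of `μ` under sign changes and permutations of coordinates gives
`E[conj (v a) * v b] = δ_ab / n`; expanding `∏ᵢ G (σ i) i` into monomials and integrating column
by column, only the index maps `q : Fin k → Fin n` constant on the cycles of `σ` survive, so
`E ∏ᵢ G (σ i) i = n^(#cycles σ) / n^k`. Summing over the seven cycle types of `S₅` gives the
formula.
-/

open MeasureTheory ProbabilityTheory Filter Finset Matrix

/-- The Gram matrix `Ξ†Ξ` of the matrix `Ξ` with columns `ξ 0, …, ξ (k-1)` in `ℂ^n`. -/
noncomputable def grammat {n k : ℕ} (ξ : Fin k → (Fin n → ℂ)) : Matrix (Fin k) (Fin k) ℂ :=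
  (Matrix.of fun i j => ξ j i)ᴴ * (Matrix.of fun i j => ξ j i)

/-- `μ` is the uniform distribution on the unit sphere of `ℂ^n`: a probability measure,
carried by the unit sphere, invariant under the unitary group. -/
def IsUniformSphere (n : ℕ) (μ : Measure (Fin n → ℂ)) : Prop :=
  IsProbabilityMeasure μ ∧
  (∀ᵐ v ∂μ, ∑ i, Complex.normSq (v i) = 1) ∧
  ∀ U : Matrix.unitaryGroup (Fin n) ℂ,
    Measure.map (fun v => (U : Matrix (Fin n) (Fin n) ℂ).mulVec v) μ = μ

open Equiv

namespace Equiv.Perm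

theorem comp_eq_self_iff_sameCycle_le_ker {α β : Type*} [Finite α] {σ : Perm α} {q : α → β} :
    q ∘ σ = q ↔ SameCycle.setoid σ ≤ Setoid.ker q := by
  refine ⟨fun hq x y hxy => ?_, fun h => funext fun x => h (sameCycle_apply_left.2 .rfl)⟩
  obtain ⟨k, rfl⟩ := hxy.exists_nat_pow_eq
  rw [Setoid.ker_def, coe_pow]
  exact (congrFun (Function.iterate_invariant hq k) x).symm

variable {α β : Type*} [Fintype α] [DecidableEq α] [Fintype β] [DecidableEq β]

-- `Quotient.fintype` asks for decidability of `≈`, not of `SameCycle σ`; with this instance the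
-- number of cycles is computable by `decide`.
instance decidableRelSameCycleSetoid (σ : Perm α) : DecidableRel (SameCycle.setoid σ).r :=
  instDecidableRelSameCycle σ

theorem card_filter_comp_eq_self (σ : Perm α) :
    #{q : α → β | q ∘ σ = q} = Fintype.card β ^ Fintype.card (Quotient (SameCycle.setoid σ)) := by
  rw [← Fintype.card_subtype, ← Fintype.card_fun]
  exact Fintype.card_congr
    ((subtypeEquivRight fun _ => comp_eq_self_iff_sameCycle_le_ker).trans (Setoid.liftEquiv _))

end Equiv.Perm

namespace Matrix

variable {ι R : Type*} [Fintype ι] [DecidableEq ι] [CommRing R]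

theorem det_one_add_smul_of_diag_eq_one {G : Matrix ι ι R} (hG : ∀ i, G i i = 1) (c : R) :
    (1 + c • G).det = ∑ σ : Perm ι,
      Perm.sign σ • ((1 + c) ^ #{i | σ i = i} * c ^ #σ.support * ∏ i, G (σ i) i) := by
  rw [det_apply]
  refine sum_congr rfl fun σ _ => congrArg _ ?_
  have hentry : ∀ i, (1 + c • G) (σ i) i = (if σ i = i then 1 + c else c) * G (σ i) i := by
    intro i
    by_cases h : σ i = i
    · simp [h, hG]
    · simp [h, one_apply_ne h]
  rw [prod_congr rfl fun i _ => hentry i, prod_mul_distrib, prod_ite, prod_const, prod_const]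
  rfl

variable [StarRing R]

theorem diagonal_mem_unitaryGroup {d : ι → R} (hd : ∀ i, star (d i) * d i = 1) :
    diagonal d ∈ unitaryGroup ι R := by
  rw [mem_unitaryGroup_iff', star_eq_conjTranspose, diagonal_conjTranspose, diagonal_mul_diagonal,
    ← diagonal_one]
  exact congrArg diagonal (funext hd)

theorem permMatrix_mem_unitaryGroup (σ : Perm ι) : σ.permMatrix R ∈ unitaryGroup ι R := by
  rw [mem_unitaryGroup_iff', star_eq_conjTranspose, conjTranspose_permMatrix, ← permMatrix_mul,
    mul_inv_cancel, permMatrix_one]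

end Matrix

section Gram

variable {n k : ℕ}

theorem grammat_apply (ξ : Fin k → Fin n → ℂ) (i j : Fin k) :
    grammat ξ i j = ∑ a, star (ξ i a) * ξ j a := by
  simp [grammat, mul_apply]

theorem grammat_apply_self {ξ : Fin k → Fin n → ℂ} {i : Fin k}
    (h : ∑ a, Complex.normSq (ξ i a) = 1) : grammat ξ i i = 1 := by
  simp only [grammat_apply, Complex.star_def, ← Complex.normSq_eq_conj_mul_self,
    ← Complex.ofReal_sum, h, Complex.ofReal_one]

theorem prod_grammat_eq_sum (ξ : Fin k → Fin n → ℂ) (σ : Perm (Fin k)) :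
    ∏ i, grammat ξ (σ i) i = ∑ q : Fin k → Fin n, ∏ j, star (ξ j (q (σ.symm j))) * ξ j (q j) := by
  simp only [grammat_apply, Fintype.prod_sum]
  refine sum_congr rfl fun q _ => ?_
  rw [prod_mul_distrib, prod_mul_distrib, ← Equiv.prod_comp σ fun j => star (ξ j (q (σ.symm j)))]
  simp only [symm_apply_apply]

end Gram

theorem Complex.norm_le_one_of_sum_normSq_eq_one {ι : Type*} [Fintype ι] {v : ι → ℂ}
    (hv : ∑ i, normSq (v i) = 1) (a : ι) : ‖v a‖ ≤ 1 := by
  refine (sq_le_one_iff₀ (norm_nonneg _)).1 ?_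
  rw [Complex.sq_norm, ← hv]
  exact single_le_sum (fun i _ => normSq_nonneg (v i)) (mem_univ a)

namespace IsUniformSphere

variable {n k : ℕ} {μ : Measure (Fin n → ℂ)}

theorem ne_zero (hμ : IsUniformSphere n μ) : n ≠ 0 := by
  have := hμ.1
  rintro rfl
  obtain ⟨v, hv⟩ := hμ.2.1.exists
  simp at hv

theorem integral_comp_mulVec {E : Type*} [NormedAddCommGroup E] [NormedSpace ℝ E]
    (hμ : IsUniformSphere n μ) {U : Matrix (Fin n) (Fin n) ℂ} (hU : U ∈ unitaryGroup (Fin n) ℂ)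
    {f : (Fin n → ℂ) → E} (hf : Continuous f) :
    ∫ v, f (U *ᵥ v) ∂μ = ∫ v, f v ∂μ := by
  conv_rhs => rw [← hμ.2.2 ⟨U, hU⟩]
  exact (integral_map (continuous_const.matrix_mulVec continuous_id).aemeasurable
    hf.aestronglyMeasurable).symm

theorem integrable_conj_mul (hμ : IsUniformSphere n μ) (a b : Fin n) :
    Integrable (fun v : Fin n → ℂ => star (v a) * v b) μ := by
  have := hμ.1
  refine .of_bound (by fun_prop) 1 ?_
  filter_upwards [hμ.2.1] with v hv
  rw [norm_mul, norm_star]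
  exact mul_le_one₀ (Complex.norm_le_one_of_sum_normSq_eq_one hv a) (norm_nonneg _)
    (Complex.norm_le_one_of_sum_normSq_eq_one hv b)

theorem integral_conj_mul_of_ne (hμ : IsUniformSphere n μ) {a b : Fin n} (hab : a ≠ b) :
    ∫ v, star (v a) * v b ∂μ = 0 := by
  set d : Fin n → ℂ := fun i => if i = a then -1 else 1
  have hU : diagonal d ∈ unitaryGroup (Fin n) ℂ :=
    diagonal_mem_unitaryGroup fun i => by by_cases h : i = a <;> simp [d, h]
  have hflip := hμ.integral_comp_mulVec hU (f := fun v => star (v a) * v b) (by fun_prop)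
  simp only [mulVec_diagonal, d, ↓reduceIte, if_neg hab.symm, one_mul, star_neg,
    neg_mul, integral_neg] at hflip
  exact neg_eq_self.mp hflip

theorem integral_conj_mul_self_eq (hμ : IsUniformSphere n μ) (a b : Fin n) :
    ∫ v, star (v a) * v a ∂μ = ∫ v, star (v b) * v b ∂μ := by
  have hswap := hμ.integral_comp_mulVec (permMatrix_mem_unitaryGroup (swap a b))
    (f := fun v => star (v a) * v a) (by fun_prop)
  simpa only [permMatrix_mulVec, Function.comp_apply, swap_apply_left] using hswap.symm

theorem integral_conj_mul (hμ : IsUniformSphere n μ) (a b : Fin n) :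
    ∫ v, star (v a) * v b ∂μ = if a = b then (n : ℂ)⁻¹ else 0 := by
  have := hμ.1
  split_ifs with hab
  · subst hab
    have htotal : ∑ i, ∫ v, star (v i) * v i ∂μ = 1 := by
      rw [← integral_finsetSum _ fun i _ => hμ.integrable_conj_mul i i,
        integral_congr_ae (g := fun _ => (1 : ℂ)) ?_, integral_const, probReal_univ, one_smul]
      filter_upwards [hμ.2.1] with v hv
      simp only [Complex.star_def, ← Complex.normSq_eq_conj_mul_self, ← Complex.ofReal_sum, hv,
        Complex.ofReal_one]
    simp only [fun i => hμ.integral_conj_mul_self_eq i a, sum_const, card_univ,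
      Fintype.card_fin, nsmul_eq_mul] at htotal
    exact eq_inv_of_mul_eq_one_right htotal
  · exact hμ.integral_conj_mul_of_ne hab

section Product

variable {ι : Type*} [Fintype ι]

theorem integral_prod_conj_mul (hμ : IsUniformSphere n μ) (p q : ι → Fin n) :
    ∫ ξ : ι → Fin n → ℂ, ∏ j, star (ξ j (p j)) * ξ j (q j) ∂(Measure.pi fun _ => μ)
      = if p = q then (n : ℂ)⁻¹ ^ Fintype.card ι else 0 := by
  have := hμ.1
  rw [integral_fintype_prod_eq_prod (fun j (v : Fin n → ℂ) => star (v (p j)) * v (q j))]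
  simp only [hμ.integral_conj_mul, Fintype.prod_ite_zero, prod_const, card_univ, funext_iff]

theorem integrable_prod_conj_mul (hμ : IsUniformSphere n μ) (p q : ι → Fin n) :
    Integrable (fun ξ : ι → Fin n → ℂ => ∏ j, star (ξ j (p j)) * ξ j (q j))
      (Measure.pi fun _ => μ) := by
  have := hμ.1
  exact .fintype_prod (f := fun j (v : Fin n → ℂ) => star (v (p j)) * v (q j))
    fun j => hμ.integrable_conj_mul _ _

theorem ae_forall_sum_normSq_eq_one (hμ : IsUniformSphere n μ) :
    ∀ᵐ ξ : ι → Fin n → ℂ ∂(Measure.pi fun _ => μ), ∀ i, ∑ a, Complex.normSq (ξ i a) = 1 := by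
  have := hμ.1
  exact ae_all_iff.2 fun i =>
    (Measure.tendsto_eval_ae_ae (μ := fun _ => μ) (i := i)).eventually hμ.2.1

end Product

theorem integrable_prod_grammat (hμ : IsUniformSphere n μ) (σ : Perm (Fin k)) :
    Integrable (fun ξ => ∏ i, grammat ξ (σ i) i) (Measure.pi fun _ => μ) := by
  simp only [prod_grammat_eq_sum]
  exact integrable_finsetSum _ fun q _ => hμ.integrable_prod_conj_mul _ _

theorem integral_prod_grammat (hμ : IsUniformSphere n μ) (σ : Perm (Fin k)) :
    ∫ ξ, ∏ i, grammat ξ (σ i) i ∂(Measure.pi fun _ => μ)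
      = (n : ℂ) ^ Fintype.card (Quotient (Perm.SameCycle.setoid σ)) / n ^ k := by
  simp only [prod_grammat_eq_sum]
  rw [integral_finsetSum _ fun q _ => hμ.integrable_prod_conj_mul _ _]
  simp only [hμ.integral_prod_conj_mul, Fintype.card_fin, sum_ite, sum_const_zero, add_zero,
    sum_const, nsmul_eq_mul]
  have hcount : #{q : Fin k → Fin n | (fun j => q (σ.symm j)) = q}
      = #{q : Fin k → Fin n | q ∘ σ = q} := by
    congr 1
    ext q
    simp only [mem_filter, mem_univ, true_and, ← Function.comp_def]
    rw [comp_symm_eq, eq_comm]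
  rw [hcount, Perm.card_filter_comp_eq_self, Fintype.card_fin, inv_pow, ← div_eq_mul_inv]
  push_cast
  rfl

theorem det_one_add_smul_grammat_ae_eq (hμ : IsUniformSphere n μ) (c : ℂ) :
    (fun ξ : Fin k → Fin n → ℂ => (1 + c • grammat ξ).det) =ᵐ[Measure.pi fun _ => μ]
      fun ξ => ∑ σ : Perm (Fin k), ((Perm.sign σ : ℤ) : ℂ) *
        ((1 + c) ^ #{i | σ i = i} * c ^ #σ.support * ∏ i, grammat ξ (σ i) i) := by
  filter_upwards [hμ.ae_forall_sum_normSq_eq_one] with ξ hξ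
  simp only [det_one_add_smul_of_diag_eq_one (fun i => grammat_apply_self (hξ i)),
    Units.smul_def, zsmul_eq_mul]

theorem integrable_det_one_add_smul_grammat (hμ : IsUniformSphere n μ) (c : ℂ) :
    Integrable (fun ξ : Fin k → Fin n → ℂ => (1 + c • grammat ξ).det)
      (Measure.pi fun _ => μ) :=
  (integrable_finsetSum _ fun σ _ =>
    ((hμ.integrable_prod_grammat σ).const_mul _).const_mul _).congr
    (hμ.det_one_add_smul_grammat_ae_eq c).symm

theorem integral_det_one_add_smul_grammat (hμ : IsUniformSphere n μ) (c : ℂ) :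
    ∫ ξ : Fin k → Fin n → ℂ, (1 + c • grammat ξ).det ∂(Measure.pi fun _ => μ)
      = (∑ σ : Perm (Fin k), Perm.sign σ • ((1 + c) ^ #{i | σ i = i} * c ^ #σ.support
          * (n : ℂ) ^ Fintype.card (Quotient (Perm.SameCycle.setoid σ)))) / n ^ k := by
  rw [integral_congr_ae (hμ.det_one_add_smul_grammat_ae_eq c),
    integral_finsetSum _ fun σ _ => ((hμ.integrable_prod_grammat σ).const_mul _).const_mul _,
    sum_div]
  refine sum_congr rfl fun σ _ => ?_
  rw [integral_const_mul, integral_const_mul, hμ.integral_prod_grammat, Units.smul_def,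
    zsmul_eq_mul]
  ring

end IsUniformSphere

set_option maxRecDepth 10000 in
theorem sum_perm_fin_five {R : Type*} [CommRing R] (c m : R) :
    ∑ σ : Perm (Fin 5), Perm.sign σ • ((1 + c) ^ #{i | σ i = i} * c ^ #σ.support
        * m ^ Fintype.card (Quotient (Perm.SameCycle.setoid σ)))
      = (1 + c) ^ 5 * m ^ 5 - 10 * c ^ 2 * (1 + c) ^ 3 * m ^ 4 + 20 * c ^ 3 * (1 + c) ^ 2 * m ^ 3
        + 15 * c ^ 4 * (1 + c) * m ^ 3 - 30 * c ^ 4 * (1 + c) * m ^ 2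
        - 20 * c ^ 5 * m ^ 2 + 24 * c ^ 5 * m := by
  let stat (σ : Perm (Fin 5)) : ℤˣ × ℕ × ℕ × ℕ :=
    (Perm.sign σ, #{i | σ i = i}, #σ.support, Fintype.card (Quotient (Perm.SameCycle.setoid σ)))
  have hstat : (univ : Finset (Perm (Fin 5))).val.map stat =
      {(1, 5, 0, 5)} + .replicate 10 (-1, 3, 2, 4) + .replicate 20 (1, 2, 3, 3)
        + .replicate 15 (1, 1, 4, 3) + .replicate 30 (-1, 1, 4, 2)
        + .replicate 20 (-1, 0, 5, 2) + .replicate 24 (1, 0, 5, 1) := by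
    decide
  let term (t : ℤˣ × ℕ × ℕ × ℕ) : R := t.1 • ((1 + c) ^ t.2.1 * c ^ t.2.2.1 * m ^ t.2.2.2)
  calc _ = ((univ.val.map stat).map term).sum := by rw [Multiset.map_map]; rfl
    _ = _ := by
      rw [hstat]
      simp only [Multiset.map_add, Multiset.map_replicate, Multiset.map_singleton,
        Multiset.sum_add, Multiset.sum_replicate, Multiset.sum_singleton, nsmul_eq_mul,
        Units.neg_smul, one_smul, term]
      ring

theorem stmt8_general (n : ℕ) (μ : Measure (Fin n → ℂ)) (hμ : IsUniformSphere n μ)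
    (c : ℝ) :
    (∫ ξ : Fin 5 → Fin n → ℂ,
        ((1 + (c : ℂ) • grammat ξ).det.re) ∂(Measure.pi fun _ : Fin 5 => μ))
      = (1 + c) ^ 5 - 10 * c ^ 2 * (1 + c) ^ 3 / n + 20 * c ^ 3 * (1 + c) ^ 2 / n ^ 2
          - c ^ 4 * (1 + c) * (30 / n ^ 3 - 15 / n ^ 2)
          + c ^ 5 * (24 / n ^ 4 - 20 / n ^ 3) := by
  have hn : (n : ℂ) ≠ 0 := Nat.cast_ne_zero.2 hμ.ne_zero
  have hexp : ∫ ξ : Fin 5 → Fin n → ℂ, (1 + (c : ℂ) • grammat ξ).det ∂(Measure.pi fun _ => μ)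
      = ((1 + c) ^ 5 - 10 * c ^ 2 * (1 + c) ^ 3 / n + 20 * c ^ 3 * (1 + c) ^ 2 / n ^ 2
          - c ^ 4 * (1 + c) * (30 / n ^ 3 - 15 / n ^ 2)
          + c ^ 5 * (24 / n ^ 4 - 20 / n ^ 3) : ℝ) := by
    rw [hμ.integral_det_one_add_smul_grammat, sum_perm_fin_five]
    push_cast
    field_simp
    ring
  calc _ = RCLike.re (∫ ξ : Fin 5 → Fin n → ℂ, (1 + (c : ℂ) • grammat ξ).det
          ∂(Measure.pi fun _ => μ)) := integral_re (hμ.integrable_det_one_add_smul_grammat _)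
    _ = _ := by rw [hexp]; exact Complex.ofReal_re _

/-- `E[det(I₅ + c Ξ†Ξ)] = (1+c)⁵ − 10c²(1+c)³/n + 20c³(1+c)²/n²
− c⁴(1+c)(30/n³ − 15/n²) + c⁵(24/n⁴ − 20/n³)` for `Ξ` with five i.i.d. columns
uniform on the unit sphere of `ℂ^n`. -/
theorem stmt8 (n : ℕ) (hn : 1 ≤ n) (μ : Measure (Fin n → ℂ)) (hμ : IsUniformSphere n μ)
    (c : ℝ) (hc : 0 < c) :
    (∫ ξ : Fin 5 → Fin n → ℂ,
        ((1 + (c : ℂ) • grammat ξ).det.re) ∂(Measure.pi fun _ : Fin 5 => μ))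
      = (1 + c) ^ 5 - 10 * c ^ 2 * (1 + c) ^ 3 / n + 20 * c ^ 3 * (1 + c) ^ 2 / n ^ 2
          - c ^ 4 * (1 + c) * (30 / n ^ 3 - 15 / n ^ 2)
          + c ^ 5 * (24 / n ^ 4 - 20 / n ^ 3) :=
  stmt8_general n μ hμ c
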